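/- Under Assumption 1, if α < 1/(βM), then for all θ, θ' ∈ Θ the proposal probability admits the lower bound Q_{α,β}(θ'|θ) ≥ exp(β⟨∇U(θ), θ'−θ⟩ − ‖θ−θ'‖²/(2α)) / Σ_{x∈Θ} exp(β(U(x) − U(θ))). -/

import Mathlib

open scoped RealInnerProductSpace

/-! The descent lemma for a function with `M`-Lipschitz gradient gives
`β⟪∇U θ, x - θ⟫ - βM‖x - θ‖²/2 ≤ β(U x - U θ)`, and `αβM < 1` makes the proposal's penalty
`‖x - θ‖²/(2α)` exceed the curvature term `βM‖x - θ‖²/2`. Hence every summand of `Z_{α,β}(θ)` is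
at most `exp(β(U x - U θ))`, which bounds the normalizing constant from above. -/

section DescentLemma

variable {E : Type*} [NormedAddCommGroup E] [InnerProductSpace ℝ E] [CompleteSpace E]
  {f : E → ℝ} {g : E → E} {M : ℝ} {x : E}

theorem HasGradientAt.hasDerivAt_comp_add_smul {f' v : E} {t : ℝ}
    (hf : HasGradientAt f f' (x + t • v)) :
    HasDerivAt (fun s : ℝ => f (x + s • v)) ⟪f', v⟫ t := by
  have hline : HasDerivAt (fun s : ℝ => x + s • v) v t := by
    simpa using ((hasDerivAt_id t).smul_const v).const_add x
  exact (hf.hasFDerivAt.comp_hasDerivAt t hline).congr_deriv (by simp)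

theorem inner_sub_sub_sq_le_of_lipschitz_gradient (hf : ∀ y, HasGradientAt f (g y) y)
    (hg : ∀ y, ‖g y - g x‖ ≤ M * ‖y - x‖) (y : E) :
    ⟪g x, y - x⟫ - M / 2 * ‖y - x‖ ^ 2 ≤ f y - f x := by
  set v := y - x
  -- `ψ` has derivative `⟪g (x + t • v) - g x, v⟫ + M t ‖v‖²`, nonnegative for `t ≥ 0`.
  let ψ : ℝ → ℝ := fun t => f (x + t • v) - t * ⟪g x, v⟫ + M / 2 * ‖v‖ ^ 2 * t ^ 2
  have hψ : ∀ t, HasDerivAt ψ (⟪g (x + t • v), v⟫ - ⟪g x, v⟫ + M * ‖v‖ ^ 2 * t) t := by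
    intro t
    have h := ((hf (x + t • v)).hasDerivAt_comp_add_smul.sub
      ((hasDerivAt_id t).mul_const ⟪g x, v⟫)).add
      ((hasDerivAt_pow 2 t).const_mul (M / 2 * ‖v‖ ^ 2))
    exact h.congr_deriv (by ring)
  have hmono : MonotoneOn ψ (Set.Ici 0) := by
    refine monotoneOn_of_hasDerivWithinAt_nonneg (convex_Ici 0)
      (fun t _ => (hψ t).continuousAt.continuousWithinAt) (fun t _ => (hψ t).hasDerivWithinAt) ?_
    intro t ht
    rw [interior_Ici, Set.mem_Ioi] at ht
    have hgt : ‖g (x + t • v) - g x‖ ≤ M * (t * ‖v‖) := by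
      simpa [norm_smul, abs_of_pos ht] using hg (x + t • v)
    have hcs : ⟪g x - g (x + t • v), v⟫ ≤ M * (t * ‖v‖) * ‖v‖ :=
      (real_inner_le_norm _ _).trans
        (mul_le_mul_of_nonneg_right (norm_sub_rev (g x) _ ▸ hgt) (norm_nonneg v))
    rw [inner_sub_left] at hcs
    linarith
  have h01 := hmono (Set.mem_Ici.2 le_rfl) (Set.mem_Ici.2 zero_le_one) zero_le_one
  simp only [ψ, zero_smul, add_zero, one_smul, zero_mul, sub_zero, one_mul, one_pow] at h01
  rw [show x + v = y by simp [v]] at h01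
  linarith

end DescentLemma

theorem proposal_lower_bound_general
    {d : ℕ}
    (Θ : Finset (EuclideanSpace ℝ (Fin d)))
    (U : EuclideanSpace ℝ (Fin d) → ℝ)
    (gradU : EuclideanSpace ℝ (Fin d) → EuclideanSpace ℝ (Fin d))
    (hgrad : ∀ x, HasGradientAt U (gradU x) x)
    -- Assumption 1: ∇U is M-Lipschitz
    (M : ℝ)
    (hLip : ∀ x y, ‖gradU x - gradU y‖ ≤ M * ‖x - y‖)
    -- step size and balancing parameter
    (α β : ℝ) (hα : 0 < α) (hβ0 : 0 < β)
    (hαβM : α < 1 / (β * M))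
    -- the proposal normalizing constant Z_{α,β}
    (Zc : EuclideanSpace ℝ (Fin d) → ℝ)
    (hZc : ∀ θ, Zc θ =
      ∑ x ∈ Θ, Real.exp (β * ⟪gradU θ, x - θ⟫ - ‖x - θ‖ ^ 2 / (2 * α)))
    -- the proposal Q_{α,β}
    (Q : EuclideanSpace ℝ (Fin d) → EuclideanSpace ℝ (Fin d) → ℝ)
    (hQ : ∀ θ θ', Q θ θ' =
      Real.exp (β * ⟪gradU θ, θ' - θ⟫ - ‖θ' - θ‖ ^ 2 / (2 * α)) / Zc θ)
 :
    ∀ θ ∈ Θ, ∀ θ' ∈ Θ,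
      Real.exp (β * ⟪gradU θ, θ' - θ⟫ - ‖θ - θ'‖ ^ 2 / (2 * α))
          / ∑ x ∈ Θ, Real.exp (β * (U x - U θ))
        ≤ Q θ θ' := by
  intro θ hθ θ' _
  have hβM : 0 < β * M := one_div_pos.mp (hα.trans hαβM)
  have hαβM' : α * (β * M) < 1 := (lt_div_iff₀ hβM).1 hαβM
  have hexponent : ∀ x, β * ⟪gradU θ, x - θ⟫ - ‖x - θ‖ ^ 2 / (2 * α) ≤ β * (U x - U θ) := by
    intro x
    have hdescent := inner_sub_sub_sq_le_of_lipschitz_gradient hgrad (fun y => hLip y θ) x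
    have hpenalty : β * M * ‖x - θ‖ ^ 2 ≤ ‖x - θ‖ ^ 2 / α := by
      rw [le_div_iff₀ hα]
      nlinarith [sq_nonneg ‖x - θ‖]
    have hscaled := mul_le_mul_of_nonneg_left hdescent hβ0.le
    have hhalf : ‖x - θ‖ ^ 2 / (2 * α) = ‖x - θ‖ ^ 2 / α / 2 := by ring
    linarith
  have hZpos : 0 < Zc θ := hZc θ ▸ Finset.sum_pos (fun _ _ => Real.exp_pos _) ⟨θ, hθ⟩
  have hZle : Zc θ ≤ ∑ x ∈ Θ, Real.exp (β * (U x - U θ)) :=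
    hZc θ ▸ Finset.sum_le_sum fun x _ => Real.exp_le_exp.2 (hexponent x)
  rw [hQ, norm_sub_rev θ' θ]
  exact div_le_div_of_nonneg_left (Real.exp_pos _).le hZpos hZle

/-- under Assumption 1, if α < 1/(βM), then for all θ, θ' ∈ Θ the proposal
probability satisfies
Q_{α,β}(θ'|θ) ≥ exp(β⟨∇U(θ), θ'−θ⟩ − ‖θ−θ'‖²/(2α)) / Σ_{x∈Θ} exp(β(U(x) − U(θ))). -/
theorem proposal_lower_bound
    {d : ℕ} (hd : 1 ≤ d)
    (Θ : Finset (EuclideanSpace ℝ (Fin d))) (hΘ : Θ.Nonempty)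
    (U : EuclideanSpace ℝ (Fin d) → ℝ) (hU : ContDiff ℝ 2 U)
    (gradU : EuclideanSpace ℝ (Fin d) → EuclideanSpace ℝ (Fin d))
    (hgrad : ∀ x, HasGradientAt U (gradU x) x)
    -- Assumption 1: ∇U is M-Lipschitz
    (M : ℝ) (hM : 0 < M)
    (hLip : ∀ x y, ‖gradU x - gradU y‖ ≤ M * ‖x - y‖)
    -- step size and balancing parameter
    (α β : ℝ) (hα : 0 < α) (hβ0 : 0 < β) (hβ1 : β ≤ 1)
    (hαβM : α < 1 / (β * M))
    -- the proposal normalizing constant Z_{α,β}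
    (Zc : EuclideanSpace ℝ (Fin d) → ℝ)
    (hZc : ∀ θ, Zc θ =
      ∑ x ∈ Θ, Real.exp (β * ⟪gradU θ, x - θ⟫ - ‖x - θ‖ ^ 2 / (2 * α)))
    -- the proposal Q_{α,β}
    (Q : EuclideanSpace ℝ (Fin d) → EuclideanSpace ℝ (Fin d) → ℝ)
    (hQ : ∀ θ θ', Q θ θ' =
      Real.exp (β * ⟪gradU θ, θ' - θ⟫ - ‖θ' - θ‖ ^ 2 / (2 * α)) / Zc θ)
 :
    ∀ θ ∈ Θ, ∀ θ' ∈ Θ,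
      Real.exp (β * ⟪gradU θ, θ' - θ⟫ - ‖θ - θ'‖ ^ 2 / (2 * α))
          / ∑ x ∈ Θ, Real.exp (β * (U x - U θ))
        ≤ Q θ θ' :=
  proposal_lower_bound_general Θ U gradU hgrad M hLip α β hα hβ0 hαβM Zc hZc Q hQ
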